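/- Let A₁, …, A_D ∈ SL(2,ℝ), let χ : ℤ → Fin D be pseudo-ergodic, and suppose that |tr A_d| ≤ 2 for some d ∈ Fin D. Then the cocycle j ↦ A_{χ(j)} is not uniformly hyperbolic. -/

import Mathlib

open Matrix

noncomputable section

/-- Euclidean plane. -/
abbrev E2 := EuclideanSpace ℝ (Fin 2)

/-- The real projective line, as the projectivization of `ℝ²`. -/
abbrev RP1 := Projectivization ℝ E2

/-- The linear map on `E2` induced by a `2×2` matrix. -/
def matLin (A : Matrix (Fin 2) (Fin 2) ℝ) : E2 →ₗ[ℝ] E2 :=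
  (WithLp.linearEquiv 2 ℝ (Fin 2 → ℝ)).symm.toLinearMap ∘ₗ
    A.mulVecLin ∘ₗ (WithLp.linearEquiv 2 ℝ (Fin 2 → ℝ)).toLinearMap

/-- Matrix-vector multiplication on `E2`. -/
def mulVecE (A : Matrix (Fin 2) (Fin 2) ℝ) (v : E2) : E2 := matLin A v

/-- The action of an (invertible) matrix on the projective line `RP1`
(junk value if the matrix is not injective). -/
def matAct (A : Matrix (Fin 2) (Fin 2) ℝ) (x : RP1) : RP1 :=
  open scoped Classical in
  if h : Function.Injective (matLin A) then Projectivization.map (matLin A) h x else x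

/-- The (Euclidean) operator norm of a `2×2` matrix. -/
def matOpNorm (A : Matrix (Fin 2) (Fin 2) ℝ) : ℝ :=
  ‖LinearMap.toContinuousLinearMap (matLin A)‖

/-- The metric `d([u],[w]) = √(1 − (⟨u,w⟩/(‖u‖‖w‖))²)` on `RP1`. -/
def projDist (x y : RP1) : ℝ :=
  Real.sqrt (1 - ((inner ℝ x.rep y.rep : ℝ) / (‖x.rep‖ * ‖y.rep‖)) ^ 2)

/-- Forward cocycle iterates: `fwd A n i = A(i+n−1)⋯A(i)`. -/
def fwd (A : ℤ → Matrix (Fin 2) (Fin 2) ℝ) : ℕ → ℤ → Matrix (Fin 2) (Fin 2) ℝ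
  | 0, _ => 1
  | n + 1, i => A (i + n) * fwd A n i

/-- Backward cocycle iterates: `bwd A n i = A(i−n)⁻¹⋯A(i−1)⁻¹`. -/
def bwd (A : ℤ → Matrix (Fin 2) (Fin 2) ℝ) : ℕ → ℤ → Matrix (Fin 2) (Fin 2) ℝ
  | 0, _ => 1
  | n + 1, i => bwd A n (i - 1) * (A (i - 1))⁻¹

/-- `w` is a nonzero vector spanning the line `x ∈ RP1`. -/
def SpansLine (w : E2) (x : RP1) : Prop := ∃ h : w ≠ 0, Projectivization.mk ℝ w h = x

/-- Uniform hyperbolicity witnessed by unstable/stable directions `u`, `s`. -/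
def IsUHWith (P : ℤ → Matrix (Fin 2) (Fin 2) ℝ) (u s : ℤ → RP1) : Prop :=
  (∀ i : ℤ, matAct (P i) (u i) = u (i + 1) ∧ matAct (P i) (s i) = s (i + 1)) ∧
  ∃ C > 0, ∃ η > 1, ∀ i : ℤ, ∀ n : ℕ,
    (∀ w : E2, ‖w‖ = 1 → SpansLine w (u i) → ‖mulVecE (bwd P n i) w‖ ≤ C / η ^ n) ∧
    (∀ w : E2, ‖w‖ = 1 → SpansLine w (s i) → ‖mulVecE (fwd P n i) w‖ ≤ C / η ^ n)

/-- Uniform hyperbolicity of a cocycle. -/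
def IsUH (P : ℤ → Matrix (Fin 2) (Fin 2) ℝ) : Prop := ∃ u s, IsUHWith P u s

/-- Dominated splitting (DS1)–(DS4). -/
def IsDS (T : ℤ → Matrix (Fin 2) (Fin 2) ℝ) : Prop :=
  ∃ u s : ℤ → RP1,
    (∀ i : ℤ, matAct (T i) (u i) = u (i + 1) ∧ matAct (T i) (s i) = s (i + 1)) ∧
    ∃ N : ℕ, 1 ≤ N ∧
      (∃ η > 1, ∀ i : ℤ, ∀ w w' : E2, ‖w‖ = 1 → ‖w'‖ = 1 →
        SpansLine w (u i) → SpansLine w' (s i) →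
        ‖mulVecE (fwd T N i) w‖ > η * ‖mulVecE (fwd T N i) w'‖) ∧
      (∃ δ > 0, ∀ i : ℤ, projDist (u i) (s i) > δ) ∧
      (∃ c > 0, ∀ i : ℤ, c ≤ matOpNorm (fwd T N i))

/-- A bi-infinite sequence is pseudo-ergodic if it contains every finite word. -/
def PseudoErgodicZ {D : ℕ} (χ : ℤ → Fin D) : Prop :=
  ∀ M : ℕ, 1 ≤ M → ∀ w : Fin M → Fin D, ∃ j : ℤ, ∀ k : Fin M, χ (j + (k : ℕ)) = w k

/-!
A cocycle with `|tr A_d| ≤ 2` cannot be uniformly hyperbolic along a long block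
`d d ⋯ d`, which pseudo-ergodicity provides. On such a block the stable direction must be
contracted exponentially by `(A_d)^M`. But for `B ∈ SL(2,ℝ)` with `|tr B| ≤ 2` the
Cayley–Hamilton relation `B² = (tr B) B − 1` writes `Bⁿ` in terms of Chebyshev coefficients
bounded by `n`, so `‖Bⁿ‖` grows at most linearly. Since `B⁻¹` has the same trace, `Bᴹ` shrinks
no unit vector below length of order `1/M`, which eventually exceeds `C η^{-M}`.
-/

open Filter
open scoped Matrix.Norms.L2Operator

/-- `chebyshevSeq t n = U_{n-1}(t/2)`, with `U` the Chebyshev polynomials of the second kind. -/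
def chebyshevSeq (t : ℝ) : ℕ → ℝ
  | 0 => 0
  | 1 => 1
  | n + 2 => t * chebyshevSeq t (n + 1) - chebyshevSeq t n

lemma chebyshevSeq_add_two (t : ℝ) (n : ℕ) :
    chebyshevSeq t (n + 2) = t * chebyshevSeq t (n + 1) - chebyshevSeq t n := rfl

lemma chebyshevSeq_succ_sq_sub_add_sq (t : ℝ) (n : ℕ) :
    chebyshevSeq t (n + 1) ^ 2 - t * chebyshevSeq t (n + 1) * chebyshevSeq t n
      + chebyshevSeq t n ^ 2 = 1 := by
  induction n with
  | zero => simp [chebyshevSeq]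
  | succ n ih => rw [chebyshevSeq_add_two]; linear_combination ih

lemma abs_chebyshevSeq_le {t : ℝ} (ht : |t| ≤ 2) (n : ℕ) : |chebyshevSeq t n| ≤ n := by
  induction n with
  | zero => simp [chebyshevSeq]
  | succ n ih =>
    set a := chebyshevSeq t n
    set b := chebyshevSeq t (n + 1)
    -- for `|t| ≤ 2` the invariant form `b² - t b a + a² = 1` dominates `(|b| - |a|)²`
    have hform : t * b * a ≤ 2 * (|b| * |a|) := by
      calc t * b * a ≤ |t| * (|b| * |a|) := by
            rw [← abs_mul, ← abs_mul, ← mul_assoc]; exact le_abs_self _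
        _ ≤ 2 * (|b| * |a|) := by gcongr
    have hstep : (|b| - |a|) ^ 2 ≤ 1 := by
      nlinarith [chebyshevSeq_succ_sq_sub_add_sq t n, sq_abs a, sq_abs b]
    push_cast
    nlinarith [abs_nonneg a, abs_nonneg b]

lemma pow_succ_eq_chebyshevSeq_smul {R : Type*} [Ring R] [Algebra ℝ R] {x : R} {t : ℝ}
    (hx : x * x = t • x - 1) (n : ℕ) :
    x ^ (n + 1) = chebyshevSeq t (n + 1) • x - chebyshevSeq t n • (1 : R) := by
  induction n with
  | zero => simp [chebyshevSeq]
  | succ n ih =>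
    rw [pow_succ, ih, chebyshevSeq_add_two, sub_mul, smul_mul_assoc, smul_mul_assoc, one_mul, hx]
    module

lemma norm_pow_le_of_mul_self_eq {R : Type*} [NormedRing R] [NormedAlgebra ℝ R] [NormOneClass R]
    {x : R} {t : ℝ} (hx : x * x = t • x - 1) (ht : |t| ≤ 2) (n : ℕ) :
    ‖x ^ n‖ ≤ (n + 1) * (‖x‖ + 1) := by
  cases n with
  | zero => simp [norm_nonneg]
  | succ n =>
    have h1 := abs_chebyshevSeq_le ht (n + 1)
    have h0 := abs_chebyshevSeq_le ht n
    push_cast at h1 ⊢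
    calc ‖x ^ (n + 1)‖
        ≤ |chebyshevSeq t (n + 1)| * ‖x‖ + |chebyshevSeq t n| := by
          rw [pow_succ_eq_chebyshevSeq_smul hx]
          refine (norm_sub_le _ _).trans ?_
          simp only [norm_smul, norm_one, mul_one, Real.norm_eq_abs, le_refl]
      _ ≤ (n + 1) * ‖x‖ + n := by gcongr
      _ ≤ (n + 1 + 1) * (‖x‖ + 1) := by nlinarith [norm_nonneg x]

lemma mulVecE_eq_toEuclideanCLM (B : Matrix (Fin 2) (Fin 2) ℝ) (v : E2) :
    mulVecE B v = toEuclideanCLM (𝕜 := ℝ) B v := rfl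

lemma mulVecE_mul (B B' : Matrix (Fin 2) (Fin 2) ℝ) (v : E2) :
    mulVecE (B * B') v = mulVecE B (mulVecE B' v) := by
  rw [mulVecE_eq_toEuclideanCLM, map_mul]; rfl

lemma mulVecE_one (v : E2) : mulVecE 1 v = v := by
  rw [mulVecE_eq_toEuclideanCLM, map_one]; rfl

lemma norm_mulVecE_le (B : Matrix (Fin 2) (Fin 2) ℝ) (v : E2) : ‖mulVecE B v‖ ≤ ‖B‖ * ‖v‖ :=
  (toEuclideanCLM (𝕜 := ℝ) B).le_opNorm v

lemma Matrix.mul_self_eq_trace_smul_sub_det_smul_one {R : Type*} [CommRing R]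
    (B : Matrix (Fin 2) (Fin 2) R) : B * B = B.trace • B - B.det • 1 := by
  ext i j
  fin_cases i <;> fin_cases j <;>
    simp [Matrix.mul_apply, Matrix.trace_fin_two, Matrix.det_fin_two, Fin.sum_univ_two] <;> ring

lemma Matrix.SpecialLinearGroup.trace_coe_inv {R : Type*} [CommRing R]
    (g : SpecialLinearGroup (Fin 2) R) :
    trace (↑g⁻¹ : Matrix (Fin 2) (Fin 2) R) = trace (↑g : Matrix (Fin 2) (Fin 2) R) := by
  rw [coe_inv, adjugate_fin_two, trace_fin_two, trace_fin_two]
  simp [add_comm]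

lemma Matrix.SpecialLinearGroup.norm_pow_le_of_abs_trace_le_two
    (g : SpecialLinearGroup (Fin 2) ℝ) (hg : |trace (↑g : Matrix (Fin 2) (Fin 2) ℝ)| ≤ 2) (n : ℕ) :
    ‖(↑(g ^ n) : Matrix (Fin 2) (Fin 2) ℝ)‖
      ≤ (n + 1) * (‖(↑g : Matrix (Fin 2) (Fin 2) ℝ)‖ + 1) := by
  refine coe_pow g n ▸ norm_pow_le_of_mul_self_eq ?_ hg n
  simpa using Matrix.mul_self_eq_trace_smul_sub_det_smul_one (↑g : Matrix (Fin 2) (Fin 2) ℝ)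

lemma Matrix.SpecialLinearGroup.norm_le_mul_norm_mulVecE_pow
    (g : SpecialLinearGroup (Fin 2) ℝ)
    (hg : |trace (↑g : Matrix (Fin 2) (Fin 2) ℝ)| ≤ 2) (n : ℕ) (v : E2) :
    ‖v‖ ≤ (n + 1) * (‖(↑g⁻¹ : Matrix (Fin 2) (Fin 2) ℝ)‖ + 1)
      * ‖mulVecE (↑(g ^ n) : Matrix (Fin 2) (Fin 2) ℝ) v‖ := by
  have hinv : mulVecE (↑(g⁻¹ ^ n)) (mulVecE (↑(g ^ n)) v) = v := by
    rw [← mulVecE_mul, ← coe_mul, inv_pow, inv_mul_cancel, coe_one, mulVecE_one]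
  calc ‖v‖ = ‖mulVecE (↑(g⁻¹ ^ n)) (mulVecE (↑(g ^ n)) v)‖ := by rw [hinv]
    _ ≤ ‖(↑(g⁻¹ ^ n) : Matrix (Fin 2) (Fin 2) ℝ)‖ * ‖mulVecE (↑(g ^ n)) v‖ :=
        norm_mulVecE_le _ _
    _ ≤ _ := by
        gcongr
        exact norm_pow_le_of_abs_trace_le_two g⁻¹ (trace_coe_inv g ▸ hg) n

lemma fwd_eq_pow_of_forall_eq {P : ℤ → Matrix (Fin 2) (Fin 2) ℝ} {B : Matrix (Fin 2) (Fin 2) ℝ}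
    {i : ℤ} {n : ℕ} (h : ∀ k < n, P (i + k) = B) : fwd P n i = B ^ n := by
  induction n with
  | zero => rfl
  | succ n ih =>
    rw [fwd, ih fun k hk => h k (Nat.lt_succ_of_lt hk), h n (Nat.lt_succ_self n), pow_succ']

lemma exists_norm_eq_one_spansLine (x : RP1) : ∃ w : E2, ‖w‖ = 1 ∧ SpansLine w x := by
  induction x using Projectivization.ind with | h v hv =>
  refine ⟨‖v‖⁻¹ • v, norm_smul_inv_norm hv,
    smul_ne_zero (inv_ne_zero (norm_ne_zero_iff.2 hv)) hv,
    (Projectivization.mk_eq_mk_iff' ℝ _ _ _ hv).2 ⟨‖v‖⁻¹, rfl⟩⟩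

lemma IsUH.exists_norm_mulVecE_fwd_le {P : ℤ → Matrix (Fin 2) (Fin 2) ℝ} (hP : IsUH P) :
    ∃ C, ∃ η > 1, ∀ i : ℤ, ∀ n : ℕ, ∃ w : E2, ‖w‖ = 1 ∧ ‖mulVecE (fwd P n i) w‖ ≤ C / η ^ n := by
  obtain ⟨_, s, _, C, _, η, hη, hcontr⟩ := hP
  refine ⟨C, η, hη, fun i n => ?_⟩
  obtain ⟨w, hw, hws⟩ := exists_norm_eq_one_spansLine (s i)
  exact ⟨w, hw, (hcontr i n).2 w hw hws⟩

lemma eventually_succ_mul_div_pow_lt_one (K : ℝ) {η : ℝ} (hη : 1 < η) :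
    ∀ᶠ n : ℕ in atTop, (n + 1) * K / η ^ n < 1 := by
  have h := ((tendsto_pow_const_div_const_pow_of_one_lt 1 hη).add
    (tendsto_pow_const_div_const_pow_of_one_lt 0 hη)).mul_const K
  rw [zero_add, zero_mul] at h
  exact (h.eventually_lt_const one_pos).mono fun n hn => lt_of_eq_of_lt (by ring) hn

theorem stmt_8 (D : ℕ) (A : Fin D → Matrix.SpecialLinearGroup (Fin 2) ℝ)
    (χ : ℤ → Fin D) (hχ : PseudoErgodicZ χ)
    (d : Fin D) (hd : |Matrix.trace (A d : Matrix (Fin 2) (Fin 2) ℝ)| ≤ 2) :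
    ¬ IsUH (fun j => (A (χ j) : Matrix (Fin 2) (Fin 2) ℝ)) := by
  intro hUH
  obtain ⟨C, η, hη, hcontr⟩ := hUH.exists_norm_mulVecE_fwd_le
  set K := ‖(↑(A d)⁻¹ : Matrix (Fin 2) (Fin 2) ℝ)‖ + 1
  obtain ⟨M, hM, hM1⟩ :=
    ((eventually_succ_mul_div_pow_lt_one (K * C) hη).and (eventually_ge_atTop 1)).exists
  obtain ⟨j, hj⟩ := hχ M hM1 fun _ => d
  obtain ⟨w, hw, hsmall⟩ := hcontr j M
  rw [fwd_eq_pow_of_forall_eq fun k hk => by rw [hj ⟨k, hk⟩],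
    ← Matrix.SpecialLinearGroup.coe_pow] at hsmall
  have hlarge := (A d).norm_le_mul_norm_mulVecE_pow hd M w
  have hK : 0 ≤ K := by positivity
  refine hM.not_ge ?_
  calc (1 : ℝ) = ‖w‖ := hw.symm
    _ ≤ (M + 1) * K * ‖mulVecE (↑(A d ^ M)) w‖ := hlarge
    _ ≤ (M + 1) * K * (C / η ^ M) := by gcongr
    _ = (M + 1) * (K * C) / η ^ M := by ring
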